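/- arXiv:1804.03523 — 2 statements merged into one kernel-verified Lean document; each statement's English description precedes it below -/
import Mathlib

section
/- Let f : ℝⁿ → ℝ be piecewise smooth under analytic partition. Then there exists a Borel measurable subset A ⊆ ℝⁿ of Lebesgue measure zero such that f is differentiable at every point of ℝⁿ \ A. -/
open MeasureTheory Set

section Aux

open Filter

private lemma countable_zeros_aux (g : ℝ → ℝ) (hg : ∀ t, AnalyticAt ℝ g t) {t₀ : ℝ}
    (h0 : g t₀ ≠ 0) : {t : ℝ | g t = 0}.Countable := by
  set Z := {t : ℝ | g t = 0} with hZ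
  have hgc : Continuous g := continuous_iff_continuousAt.2 fun t => (hg t).continuousAt
  have hclosed : IsClosed Z := isClosed_eq hgc continuous_const
  have hdisc : DiscreteTopology Z := by
    rw [discreteTopology_subtype_iff]
    intro t ht
    rcases (hg t).eventually_eq_zero_or_eventually_ne_zero with h | h
    · exfalso
      have : EqOn g 0 univ :=
        AnalyticOnNhd.eqOn_zero_of_preconnected_of_eventuallyEq_zero
          (fun x _ => hg x) isPreconnected_univ (mem_univ t) h
      exact h0 (this (mem_univ t₀))
    · rw [inf_principal_eq_bot]
      filter_upwards [h] with z hz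
      simpa [Z] using hz
  have : Z = ⋃ k : ℕ, Z ∩ Metric.closedBall 0 k := by
    ext t
    simp only [mem_iUnion, mem_inter_iff, Metric.mem_closedBall, dist_zero_right]
    exact ⟨fun h => ⟨⌈‖t‖⌉₊, h, Nat.le_ceil _⟩, fun ⟨k, h, _⟩ => h⟩
  rw [this]
  refine countable_iUnion fun k => Set.Finite.countable ?_
  have hcpt : IsCompact (Z ∩ Metric.closedBall 0 k) :=
    (isCompact_closedBall _ _).inter_left hclosed
  exact hcpt.finite (isDiscrete_iff_discreteTopology.mpr (hdisc.of_subset inter_subset_left))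

private lemma analytic_cons_aux {n : ℕ} (z : ℝ × (Fin n → ℝ)) :
    AnalyticAt ℝ (fun z : ℝ × (Fin n → ℝ) => (Fin.cons z.1 z.2 : Fin (n+1) → ℝ)) z := by
  rw [analyticAt_pi_iff]
  intro i
  refine Fin.cases ?_ ?_ i
  · simpa using analyticAt_fst
  · intro j
    simp only [Fin.cons_succ]
    exact ((ContinuousLinearMap.proj j : (Fin n → ℝ) →L[ℝ] ℝ).analyticAt _).comp analyticAt_snd

private lemma zero_set_null_aux : ∀ (n : ℕ) (F : (Fin n → ℝ) → ℝ), (∀ x, AnalyticAt ℝ F x) →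
    (∃ x, F x ≠ 0) → volume {x | F x = 0} = 0 := by
  intro n
  induction n with
  | zero =>
    rintro F hF ⟨x0, hx0⟩
    have he : {x : Fin 0 → ℝ | F x = 0} = ∅ := by
      ext x
      simp only [mem_setOf_eq, mem_empty_iff_false, iff_false]
      rw [Subsingleton.elim x x0]
      exact hx0
    simp [he]
  | succ n ih =>
    rintro F hF ⟨x0, hx0⟩
    set G : ℝ × (Fin n → ℝ) → ℝ := fun z => F (Fin.cons z.1 z.2) with hG
    have hGa : ∀ z, AnalyticAt ℝ G z := fun z => (hF _).comp (analytic_cons_aux z)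
    have hGc : Continuous G := continuous_iff_continuousAt.2 fun z => (hGa z).continuousAt
    set S : Set (ℝ × (Fin n → ℝ)) := {z | G z = 0} with hS
    have hSm : MeasurableSet S := (isClosed_eq hGc continuous_const).measurableSet
    set e := MeasurableEquiv.piFinSuccAbove (fun _ : Fin (n + 1) => ℝ) 0 with he
    have hpre : {x : Fin (n+1) → ℝ | F x = 0} = e ⁻¹' S := by
      ext x
      simp only [mem_setOf_eq, mem_preimage, he, MeasurableEquiv.piFinSuccAbove_apply, hS, hG,
        Fin.insertNthEquiv_symm_apply, Fin.removeNth_zero]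
      rw [show (Fin.cons (x 0) (Fin.tail x) : Fin (n+1) → ℝ) = x from Fin.cons_self_tail x]
    rw [hpre, (volume_preserving_piFinSuccAbove (fun _ : Fin (n+1) => ℝ) 0).measure_preimage
      hSm.nullMeasurableSet,
      show (volume : Measure (ℝ × (Fin n → ℝ))) = ((volume : Measure ℝ).prod volume) from rfl,
      Measure.measure_prod_null hSm]
    have hg0 : G (x0 0, fun j => x0 j.succ) ≠ 0 := by
      simp only [hG]
      rw [show (Fin.cons (x0 0) (fun j => x0 j.succ) : Fin (n+1) → ℝ) = x0 from
        Fin.cons_self_tail x0]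
      exact hx0
    have hBc : {t : ℝ | G (t, fun j => x0 j.succ) = 0}.Countable :=
      countable_zeros_aux _ (fun t => (hGa _).comp (analyticAt_id.prod analyticAt_const)) hg0
    have hB : volume {t : ℝ | G (t, fun j => x0 j.succ) = 0} = 0 := hBc.measure_zero _
    rw [Filter.EventuallyEq, ae_iff]
    refine measure_mono_null ?_ hB
    intro t ht
    simp only [mem_setOf_eq, Pi.zero_apply] at ht ⊢
    by_contra hne
    exact ht (ih (fun y => G (t, y))
      (fun y => (hGa _).comp (analyticAt_const.prod analyticAt_id)) ⟨_, hne⟩)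

private lemma euclid_zero_set_null_aux {n : ℕ} (F : EuclideanSpace ℝ (Fin n) → ℝ)
    (hF : ∀ x, AnalyticAt ℝ F x) (hne : ∃ x, F x ≠ 0) :
    volume {x : EuclideanSpace ℝ (Fin n) | F x = 0} = 0 := by
  set L := (PiLp.continuousLinearEquiv 2 ℝ (fun _ : Fin n => ℝ)).symm with hL
  set F' : (Fin n → ℝ) → ℝ := fun y => F (L y) with hF'
  have hF'a : ∀ y, AnalyticAt ℝ F' y := fun y => (hF _).comp (L.analyticAt y)
  have hF'c : Continuous F' := continuous_iff_continuousAt.2 fun y => (hF'a y).continuousAt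
  have hnull : volume {y : Fin n → ℝ | F' y = 0} = 0 := by
    obtain ⟨x, hx⟩ := hne
    exact zero_set_null_aux n F' hF'a ⟨x, hx⟩
  have hpre : {x : EuclideanSpace ℝ (Fin n) | F x = 0} =
      (MeasurableEquiv.toLp 2 (Fin n → ℝ)).symm ⁻¹' {y : Fin n → ℝ | F' y = 0} := rfl
  rw [hpre, (EuclideanSpace.volume_preserving_symm_measurableEquiv_toLp (Fin n)).measure_preimage
    ((isClosed_eq hF'c continuous_const).measurableSet.nullMeasurableSet)]
  exact hnull

end Aux

/-- If `f : ℝⁿ → ℝ` is piecewise smooth under analytic partition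
(`f x = ∑ᵢ (∏ⱼ 𝟙[pᵢⱼ x ≥ 0]) ⬝ (∏ₗ 𝟙[qᵢₗ x < 0]) ⬝ hᵢ x` with the `pᵢⱼ, qᵢₗ` analytic,
the `hᵢ` smooth, a countable index set, and the regions
`Rᵢ = {x | ∀ j, pᵢⱼ x ≥ 0 ∧ ∀ l, qᵢₗ x < 0}` forming a partition of `ℝⁿ`),
then there is a Borel measurable set `A` of Lebesgue measure zero such that `f` is
differentiable at every point outside `A`. -/
theorem piecewise_smooth_differentiable_off_null_set
    {n : ℕ} {ι : Type*} [Countable ι]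
    (f : EuclideanSpace ℝ (Fin n) → ℝ)
    (M O : ι → ℕ)
    (p q : ι → ℕ → EuclideanSpace ℝ (Fin n) → ℝ)
    (h : ι → EuclideanSpace ℝ (Fin n) → ℝ)
    (hp : ∀ i j, j < M i → ∀ x, AnalyticAt ℝ (p i j) x)
    (hq : ∀ i l, l < O i → ∀ x, AnalyticAt ℝ (q i l) x)
    (hh : ∀ i, ContDiff ℝ (⊤ : ℕ∞) (h i))
    (hf : ∀ x, f x =
      ∑' i, (∏ j ∈ Finset.range (M i), if 0 ≤ p i j x then (1 : ℝ) else 0)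
        * (∏ l ∈ Finset.range (O i), if q i l x < 0 then (1 : ℝ) else 0) * h i x)
    (hcover : ⋃ i, {x | (∀ j < M i, 0 ≤ p i j x) ∧ (∀ l < O i, q i l x < 0)} = Set.univ)
    (hdisj : Pairwise (Function.onFun Disjoint fun i =>
      {x | (∀ j < M i, 0 ≤ p i j x) ∧ (∀ l < O i, q i l x < 0)})) :
    ∃ A : Set (EuclideanSpace ℝ (Fin n)), MeasurableSet A ∧ volume A = 0 ∧
      ∀ x ∉ A, DifferentiableAt ℝ f x := by
  classical
  set Aset : ι × ℕ → Set (EuclideanSpace ℝ (Fin n)) := fun k =>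
    if k.2 < M k.1 ∧ ∃ x, p k.1 k.2 x ≠ 0 then {x | p k.1 k.2 x = 0} else ∅ with hAset
  refine ⟨⋃ k, Aset k, ?_, ?_, ?_⟩
  · refine MeasurableSet.iUnion fun k => ?_
    by_cases hk : k.2 < M k.1 ∧ ∃ x, p k.1 k.2 x ≠ 0
    · simp only [hAset, if_pos hk]
      have : Continuous (p k.1 k.2) :=
        continuous_iff_continuousAt.2 fun x => (hp k.1 k.2 hk.1 x).continuousAt
      exact (isClosed_eq this continuous_const).measurableSet
    · simp [hAset, if_neg hk]
  · refine measure_iUnion_null fun k => ?_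
    by_cases hk : k.2 < M k.1 ∧ ∃ x, p k.1 k.2 x ≠ 0
    · simp only [hAset, if_pos hk]
      exact euclid_zero_set_null_aux _ (hp k.1 k.2 hk.1) hk.2
    · simp [hAset, if_neg hk]
  · intro x hx
    have hxU : x ∈ ⋃ i, {x | (∀ j < M i, 0 ≤ p i j x) ∧ (∀ l < O i, q i l x < 0)} := by
      rw [hcover]; exact mem_univ x
    obtain ⟨i, hxi⟩ := mem_iUnion.mp hxU
    have hxi' : (∀ j < M i, 0 ≤ p i j x) ∧ (∀ l < O i, q i l x < 0) := hxi
    -- the region of `i` is a neighborhood of `x`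
    have hev : ∀ᶠ y in nhds x, (∀ j < M i, 0 ≤ p i j y) ∧ (∀ l < O i, q i l y < 0) := by
      have h1 : ∀ᶠ y in nhds x, ∀ j ∈ Finset.range (M i), 0 ≤ p i j y := by
        rw [Filter.eventually_all_finset]
        intro j hj
        have hjM := Finset.mem_range.mp hj
        by_cases hz : ∃ z, p i j z ≠ 0
        · have hxA : x ∉ Aset (i, j) := fun hmem => hx (mem_iUnion.2 ⟨(i, j), hmem⟩)
          have hne : p i j x ≠ 0 := by
            simp only [hAset, if_pos (⟨hjM, hz⟩ : j < M i ∧ ∃ z, p i j z ≠ 0)] at hxA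
            simpa using hxA
          have hpos : 0 < p i j x := lt_of_le_of_ne (hxi'.1 j hjM) (Ne.symm hne)
          have hev' : ∀ᶠ y in nhds x, (0 : ℝ) < p i j y :=
            ContinuousAt.eventually_lt continuousAt_const (hp i j hjM x).continuousAt hpos
          filter_upwards [hev'] with y hy using le_of_lt hy
        · push_neg at hz
          filter_upwards with y
          rw [hz y]
      have h2 : ∀ᶠ y in nhds x, ∀ l ∈ Finset.range (O i), q i l y < 0 := by
        rw [Filter.eventually_all_finset]
        intro l hl
        have hlO := Finset.mem_range.mp hl
        exact (hq i l hlO x).continuousAt.eventually_lt continuousAt_const (hxi'.2 l hlO)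
      filter_upwards [h1, h2] with y hy1 hy2
      exact ⟨fun j hj => hy1 j (Finset.mem_range.2 hj), fun l hl => hy2 l (Finset.mem_range.2 hl)⟩
    -- `f` agrees with `h i` near `x`
    have hfeq : f =ᶠ[nhds x] h i := by
      filter_upwards [hev] with y hy
      rw [hf y]
      rw [tsum_eq_single i ?_]
      · rw [Finset.prod_eq_one fun j hj => if_pos (hy.1 j (Finset.mem_range.mp hj)),
          Finset.prod_eq_one fun l hl => if_pos (hy.2 l (Finset.mem_range.mp hl)),
          one_mul, one_mul]
      · intro i' hi'
        have hdis : y ∉ {x | (∀ j < M i', 0 ≤ p i' j x) ∧ (∀ l < O i', q i' l x < 0)} :=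
          fun hmem => (hdisj hi').le_bot ⟨hmem, hy⟩
        simp only [mem_setOf_eq, not_and_or, not_forall, not_le, not_lt] at hdis
        rcases hdis with ⟨j, hj, hpj⟩ | ⟨l, hl, hql⟩
        · have h0 : (if 0 ≤ p i' j y then (1 : ℝ) else 0) = 0 := if_neg (not_le.2 hpj)
          rw [Finset.prod_eq_zero (Finset.mem_range.2 hj) h0, zero_mul, zero_mul]
        · have h0 : (if q i' l y < 0 then (1 : ℝ) else 0) = 0 := if_neg (not_lt.2 hql)
          rw [Finset.prod_eq_zero (Finset.mem_range.2 hl) h0, mul_zero, zero_mul]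
    have hdiff : DifferentiableAt ℝ (h i) x := ((hh i).differentiable (by simp)).differentiableAt
    exact hfeq.differentiableAt_iff.mpr hdiff
end

section
/- Let f : ℝⁿ → ℝ be piecewise smooth under analytic partition. Then f is differentiable almost everywhere with respect to Lebesgue measure on ℝⁿ, i.e. the set of points at which f fails to be differentiable is contained in a set of Lebesgue measure zero. -/
open MeasureTheory Set

section AuxAnalyticZero
open Filter Topology

lemma analytic_zero_null_1d (f : ℝ → ℝ) (hf : ∀ x, AnalyticAt ℝ f x)
    (hne : ∃ x, f x ≠ 0) : volume {x : ℝ | f x = 0} = 0 := by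
  set Z := {x : ℝ | f x = 0} with hZdef
  have hcont : Continuous f := continuous_iff_continuousAt.2 fun x => (hf x).continuousAt
  have hZc : IsClosed Z := isClosed_eq hcont continuous_const
  have hiso : ∀ z ∈ Z, ∀ᶠ w in 𝓝[≠] z, f w ≠ 0 := by
    intro z hz
    rcases (hf z).eventually_eq_zero_or_eventually_ne_zero with h0 | h1
    · exfalso
      obtain ⟨x, hx⟩ := hne
      have : EqOn f 0 (univ : Set ℝ) :=
        AnalyticOnNhd.eqOn_zero_of_preconnected_of_eventuallyEq_zero
          (fun x _ => hf x) isPreconnected_univ (mem_univ z) h0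
      exact hx (this (mem_univ x))
    · exact h1
  have hcount : Z.Countable := by
    have hU : Z = ⋃ k : ℕ, Z ∩ Icc (-(k : ℝ)) k := by
      ext x
      simp only [mem_iUnion, mem_inter_iff, mem_Icc]
      constructor
      · intro hx
        obtain ⟨k, hk⟩ := exists_nat_ge |x|
        exact ⟨k, hx, neg_le_of_abs_le hk, le_of_abs_le hk⟩
      · rintro ⟨k, hk, _⟩; exact hk
    rw [hU]
    refine countable_iUnion fun k => Set.Finite.countable ?_
    have hcomp : IsCompact (Z ∩ Icc (-(k : ℝ)) k) :=
      isCompact_Icc.inter_left hZc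
    refine hcomp.finite ?_
    rw [isDiscrete_iff_discreteTopology, discreteTopology_subtype_iff]
    intro x hx
    rw [inf_principal_eq_bot]
    filter_upwards [hiso x hx.1] with w hw hwz
    exact hw hwz.1
  exact hcount.measure_zero _

lemma analytic_zero_null_pi : ∀ (n : ℕ) (f : (Fin n → ℝ) → ℝ),
    (∀ x, AnalyticAt ℝ f x) → (∃ x, f x ≠ 0) →
    volume {x : Fin n → ℝ | f x = 0} = 0 := by
  intro n
  induction n with
  | zero =>
    rintro f hf ⟨x, hx⟩
    have he : {y : Fin 0 → ℝ | f y = 0} = ∅ := by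
      ext y
      simp only [mem_setOf_eq, mem_empty_iff_false, iff_false]
      have : y = x := Subsingleton.elim _ _
      rw [this]; exact hx
    rw [he]; simp
  | succ n IH =>
    intro f hf hne
    -- the continuous linear map (t, y) ↦ Fin.cons t y
    let L : (ℝ × (Fin n → ℝ)) →L[ℝ] (Fin (n + 1) → ℝ) :=
      ContinuousLinearMap.pi fun j =>
        Fin.cases (ContinuousLinearMap.fst ℝ ℝ (Fin n → ℝ))
          (fun k => (ContinuousLinearMap.proj k).comp
            (ContinuousLinearMap.snd ℝ ℝ (Fin n → ℝ))) j
    have hL : ∀ p : ℝ × (Fin n → ℝ), L p = Fin.cons p.1 p.2 := by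
      intro p
      funext j
      induction j using Fin.cases with
      | zero => simp [L]
      | succ k => simp [L]
    set g : ℝ × (Fin n → ℝ) → ℝ := f ∘ L with hgdef
    have hg : ∀ t y, g (t, y) = f (Fin.cons t y) := by
      intro t y; simp only [hgdef, Function.comp_apply, hL]
    have hga : ∀ p, AnalyticAt ℝ g p := fun p => (hf _).comp (L.analyticAt p)
    have hgc : Continuous g := continuous_iff_continuousAt.2 fun p => (hga p).continuousAt
    set S : Set (ℝ × (Fin n → ℝ)) := {p | g p = 0} with hSdef
    have hSm : MeasurableSet S := (isClosed_eq hgc continuous_const).measurableSet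
    -- transfer via the measurable equiv
    let e := MeasurableEquiv.piFinSuccAbove (fun _ : Fin (n + 1) => ℝ) 0
    have hmp : MeasurePreserving e := volume_preserving_piFinSuccAbove (fun _ => ℝ) 0
    have hpre : e ⁻¹' S = {x : Fin (n + 1) → ℝ | f x = 0} := by
      ext x
      simp only [mem_preimage, hSdef, mem_setOf_eq]
      have he : e x = (x 0, fun j : Fin n => x (Fin.succAbove 0 j)) := rfl
      rw [he, hg]
      have : Fin.cons (x 0) (fun j : Fin n => x (Fin.succAbove 0 j)) = x := by
        funext j
        induction j using Fin.cases with
        | zero => simp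
        | succ k => simp [Fin.succAbove]
      rw [this]
    have hvol : volume {x : Fin (n + 1) → ℝ | f x = 0} = (volume.prod volume) S := by
      rw [← hpre]
      exact hmp.measure_preimage hSm.nullMeasurableSet
    rw [hvol]
    -- Fubini
    rw [Measure.measure_prod_null hSm]
    -- the bad slice set
    obtain ⟨x₀, hx₀⟩ := hne
    set c : Fin n → ℝ := Fin.tail x₀ with hcdef
    have hφ : volume {t : ℝ | f (Fin.cons t c) = 0} = 0 := by
      apply analytic_zero_null_1d
      · intro t
        have : AnalyticAt ℝ (fun t : ℝ => g (t, c)) t :=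
          (hga _).comp ((analyticAt_id).prod analyticAt_const)
        simpa only [hg] using this
      · refine ⟨x₀ 0, ?_⟩
        rw [Fin.cons_self_tail]
        exact hx₀
    have hB : volume {t : ℝ | ∀ y, f (Fin.cons t y) = 0} = 0 :=
      measure_mono_null (fun t ht => ht c) hφ
    have := (measure_eq_zero_iff_ae_notMem.mp hB)
    filter_upwards [this] with t ht
    have hslice : Prod.mk t ⁻¹' S = {y : Fin n → ℝ | f (Fin.cons t y) = 0} := by
      ext y; simp only [mem_preimage, hSdef, mem_setOf_eq, hg]
    rw [hslice]
    apply IH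
    · intro y
      have : AnalyticAt ℝ (fun y : Fin n → ℝ => g (t, y)) y :=
        (hga _).comp (analyticAt_const.prod analyticAt_id)
      simpa only [hg] using this
    · simp only [mem_setOf_eq, not_forall] at ht
      exact ht

lemma analytic_zero_null_euclidean {n : ℕ} (f : EuclideanSpace ℝ (Fin n) → ℝ)
    (hf : ∀ x, AnalyticAt ℝ f x) (hne : ∃ x, f x ≠ 0) :
    volume {x : EuclideanSpace ℝ (Fin n) | f x = 0} = 0 := by
  let e := (MeasurableEquiv.toLp 2 (Fin n → ℝ)).symm
  have hmp : MeasurePreserving e.symm :=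
    (EuclideanSpace.volume_preserving_symm_measurableEquiv_toLp (Fin n)).symm
  have hcont : Continuous f := continuous_iff_continuousAt.2 fun x => (hf x).continuousAt
  have hZm : MeasurableSet {x : EuclideanSpace ℝ (Fin n) | f x = 0} :=
    (isClosed_eq hcont continuous_const).measurableSet
  have key : volume {y : Fin n → ℝ | f (e.symm y) = 0} = 0 := by
    apply analytic_zero_null_pi
    · intro y
      have hlin : AnalyticAt ℝ (fun y : Fin n → ℝ =>
          ((PiLp.continuousLinearEquiv 2 ℝ (fun _ : Fin n => ℝ)).symm :
            (Fin n → ℝ) →L[ℝ] EuclideanSpace ℝ (Fin n)) y) y :=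
        ContinuousLinearMap.analyticAt _ y
      exact (hf _).comp hlin
    · obtain ⟨x, hx⟩ := hne
      exact ⟨e x, by simpa using hx⟩
  have : e.symm ⁻¹' {x : EuclideanSpace ℝ (Fin n) | f x = 0}
      = {y : Fin n → ℝ | f (e.symm y) = 0} := rfl
  rw [← hmp.measure_preimage hZm.nullMeasurableSet, this, key]

end AuxAnalyticZero

/-- If `f : ℝⁿ → ℝ` is piecewise smooth under analytic partition, then `f`
is differentiable almost everywhere w.r.t. Lebesgue measure: the set of points where `f`
fails to be differentiable is contained in a set of Lebesgue measure zero. -/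
theorem piecewise_smooth_differentiable_ae
    {n : ℕ} {ι : Type*} [Countable ι]
    (f : EuclideanSpace ℝ (Fin n) → ℝ)
    (M O : ι → ℕ)
    (p q : ι → ℕ → EuclideanSpace ℝ (Fin n) → ℝ)
    (h : ι → EuclideanSpace ℝ (Fin n) → ℝ)
    (hp : ∀ i j, j < M i → ∀ x, AnalyticAt ℝ (p i j) x)
    (hq : ∀ i l, l < O i → ∀ x, AnalyticAt ℝ (q i l) x)
    (hh : ∀ i, ContDiff ℝ (⊤ : ℕ∞) (h i))
    (hf : ∀ x, f x =
      ∑' i, (∏ j ∈ Finset.range (M i), if 0 ≤ p i j x then (1 : ℝ) else 0)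
        * (∏ l ∈ Finset.range (O i), if q i l x < 0 then (1 : ℝ) else 0) * h i x)
    (hcover : ⋃ i, {x | (∀ j < M i, 0 ≤ p i j x) ∧ (∀ l < O i, q i l x < 0)} = Set.univ)
    (hdisj : Pairwise (Function.onFun Disjoint fun i =>
      {x | (∀ j < M i, 0 ≤ p i j x) ∧ (∀ l < O i, q i l x < 0)})) :
    ∃ A : Set (EuclideanSpace ℝ (Fin n)), volume A = 0 ∧
      {x | ¬ DifferentiableAt ℝ f x} ⊆ A := by
  classical
  set Zp : ι → ℕ → Set (EuclideanSpace ℝ (Fin n)) := fun i j =>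
    if j < M i ∧ ¬ (∀ x, p i j x = 0) then {x | p i j x = 0} else ∅ with hZpdef
  refine ⟨⋃ i, ⋃ j, Zp i j, ?_, ?_⟩
  · refine measure_iUnion_null fun i => measure_iUnion_null fun j => ?_
    show volume (if j < M i ∧ ¬ (∀ x, p i j x = 0) then {x | p i j x = 0} else ∅) = 0
    split_ifs with hc
    · refine analytic_zero_null_euclidean _ (hp i j hc.1) ?_
      push_neg at hc
      exact hc.2
    · simp
  · intro x hx
    by_contra hxA
    apply hx
    -- x belongs to some region
    have hxu : x ∈ ⋃ i, {x | (∀ j < M i, 0 ≤ p i j x) ∧ (∀ l < O i, q i l x < 0)} := by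
      rw [hcover]; exact mem_univ x
    obtain ⟨i, hxi⟩ := mem_iUnion.mp hxu
    obtain ⟨hx1, hx2⟩ := hxi
    -- f equals h i on the region R i
    have hfR : ∀ y : EuclideanSpace ℝ (Fin n),
        ((∀ j < M i, 0 ≤ p i j y) ∧ (∀ l < O i, q i l y < 0)) →
        f y = h i y := by
      intro y hy
      rw [hf y]
      rw [tsum_eq_single i ?_]
      · rw [Finset.prod_eq_one, Finset.prod_eq_one, one_mul, one_mul]
        · intro l hl
          exact if_pos (hy.2 l (Finset.mem_range.mp hl))
        · intro j hj
          exact if_pos (hy.1 j (Finset.mem_range.mp hj))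
      · intro i' hi'
        have hyni' : y ∉ {x : EuclideanSpace ℝ (Fin n) |
            (∀ j < M i', 0 ≤ p i' j x) ∧ (∀ l < O i', q i' l x < 0)} :=
          fun hy' => Set.disjoint_left.mp (hdisj hi') hy' hy
        simp only [mem_setOf_eq, not_and_or, not_forall] at hyni'
        rcases hyni' with ⟨j, hj, hpj⟩ | ⟨l, hl, hql⟩
        · rw [Finset.prod_eq_zero (Finset.mem_range.mpr hj)
            (if_neg hpj : (if 0 ≤ p i' j y then (1:ℝ) else 0) = 0), zero_mul, zero_mul]
        · rw [Finset.prod_eq_zero (Finset.mem_range.mpr hl)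
            (if_neg hql : (if q i' l y < 0 then (1:ℝ) else 0) = 0), mul_zero, zero_mul]
    -- an open neighborhood of x inside the region
    set U : Set (EuclideanSpace ℝ (Fin n)) :=
      (⋂ j ∈ Finset.range (M i),
        if 0 < p i j x then {y : EuclideanSpace ℝ (Fin n) | 0 < p i j y} else univ) ∩
      (⋂ l ∈ Finset.range (O i), {y : EuclideanSpace ℝ (Fin n) | q i l y < 0}) with hUdef
    have hUopen : IsOpen U := by
      apply IsOpen.inter
      · refine isOpen_biInter_finset fun j hj => ?_
        split_ifs
        · exact isOpen_lt continuous_const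
            (continuous_iff_continuousAt.2 fun z => (hp i j (Finset.mem_range.mp hj) z).continuousAt)
        · exact isOpen_univ
      · refine isOpen_biInter_finset fun l hl => ?_
        exact isOpen_lt
          (continuous_iff_continuousAt.2 fun z => (hq i l (Finset.mem_range.mp hl) z).continuousAt)
          continuous_const
    have hxU : x ∈ U := by
      constructor
      · refine mem_biInter fun j hj => ?_
        split_ifs with hc
        · exact hc
        · exact mem_univ x
      · exact mem_biInter fun l hl => hx2 l (Finset.mem_range.mp hl)
    have hUR : ∀ y ∈ U, (∀ j < M i, 0 ≤ p i j y) ∧ (∀ l < O i, q i l y < 0) := by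
      intro y hy
      constructor
      · intro j hj
        have hyj := mem_iInter₂.mp hy.1 j (Finset.mem_range.mpr hj)
        by_cases hc : 0 < p i j x
        · rw [if_pos hc] at hyj
          exact le_of_lt hyj
        · -- p i j x = 0, so since x ∉ A, p i j is identically zero
          have hx0 : p i j x = 0 := le_antisymm (not_lt.mp hc) (hx1 j hj)
          have hall : ∀ z, p i j z = 0 := by
            by_contra hnall
            apply hxA
            refine mem_iUnion.mpr ⟨i, mem_iUnion.mpr ⟨j, ?_⟩⟩
            show x ∈ (if j < M i ∧ ¬ (∀ z, p i j z = 0) then {x | p i j x = 0} else ∅)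
            rw [if_pos ⟨hj, hnall⟩]
            exact hx0
          rw [hall y]
      · intro l hl
        exact mem_iInter₂.mp hy.2 l (Finset.mem_range.mpr hl)
    -- f equals h i near x, hence differentiable at x
    have heq : f =ᶠ[nhds x] h i :=
      Filter.eventually_of_mem (hUopen.mem_nhds hxU) fun y hy => hfR y (hUR y hy)
    exact heq.differentiableAt_iff.mpr (((hh i).differentiable (by simp)) x)
end
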